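/- arXiv:2010.14155 — 2 statements merged into one kernel-verified Lean document; each statement's English description precedes it below -/
import Mathlib

section
/- Let k ≥ 1, let G be a finite connected simple graph that is (P3+kP2)-free and contains a vertex set A inducing P3+(k-1)P2. If there exist two regular vertices of G at distance exactly three from one another, then G has a minimum dominating set which is not a stable set (i.e., a minimum dominating set containing two adjacent vertices). -/
/-!
Take a minimum dominating set `D` with as many vertices as possible adjacent to `A`; we may assume
`D` is stable. Then `D` misses `𝒞`: a vertex `c ∈ 𝒞 ∩ D` could be traded for a neighbour of `c`
adjacent to `A`, which dominates the clique `N(c)`. Let `d, e ∈ D` dominate `c₁, c₂`, and let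
`c₁ x y c₂` be a shortest path. We show that `(D \ {d, e}) ∪ {x, y}`, a minimum dominating set
containing the edge `xy`, dominates `G`. An undominated vertex `t` would lie at distance two from,
say, `c₁`; since `G` is (P3+kP2)-free, `N(aᵢ) ⊆ N(t)` for one of the `k` vertices `aᵢ` far from
`c₁`, so the vertex of `D` dominating `aᵢ` must be `e`. Repeating the argument from `c₂` with `aᵢ`
in place of `t` yields a second vertex of `D` in the clique `N(aᵢ)`, contradicting stability.
-/

open SimpleGraph

/-- The disjoint union of a path `P₃` and `k` copies of `P₂`. -/
def P3kP2 (k : ℕ) : SimpleGraph (Fin 3 ⊕ Fin k × Fin 2) :=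
  SimpleGraph.fromRel fun x y =>
    match x, y with
    | Sum.inl a, Sum.inl b => (b : ℕ) = (a : ℕ) + 1
    | Sum.inr a, Sum.inr b => a.1 = b.1 ∧ a.2 ≠ b.2
    | _, _ => False

/-- `G` contains no induced subgraph isomorphic to `H`. -/
def HFree {V W : Type*} (G : SimpleGraph V) (H : SimpleGraph W) : Prop :=
  IsEmpty (H ↪g G)

/-- `D` is a dominating set of `G`. -/
def IsDomSet {V : Type*} (G : SimpleGraph V) (D : Set V) : Prop :=
  ∀ v ∉ D, ∃ u ∈ D, G.Adj u v

/-- `D` is a minimum dominating set of `G`. -/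
def IsMinDomSet {V : Type*} (G : SimpleGraph V) (D : Set V) : Prop :=
  IsDomSet G D ∧ ∀ D' : Set V, IsDomSet G D' → D.ncard ≤ D'.ncard

/-- The distance from a vertex `v` to a set `A` of vertices. -/
noncomputable def distToSet {V : Type*} (G : SimpleGraph V) (v : V) (A : Set V) : ℕ :=
  sInf ((G.dist v) '' A)

/-- The set of vertices at distance two from `A` whose open neighbourhood is a clique. -/
def cliqueDistTwo {V : Type*} (G : SimpleGraph V) (A : Set V) : Set V :=
  {v | distToSet G v A = 2 ∧ G.IsClique (G.neighborSet v)}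

/-- A vertex `c₁` is regular (w.r.t. `A` and `k`) if `c₁ ∈ 𝒞` and there are `k` further
vertices of `𝒞` such that all `k+1` of them are pairwise at distance at least four. -/
def IsRegularVertex {V : Type*} (G : SimpleGraph V) (k : ℕ) (A : Set V) (c₁ : V) : Prop :=
  c₁ ∈ cliqueDistTwo G A ∧ ∃ c : Fin k → V, (∀ i, c i ∈ cliqueDistTwo G A) ∧
    (∀ i, 4 ≤ G.dist c₁ (c i)) ∧ ∀ i j, i ≠ j → 4 ≤ G.dist (c i) (c j)

/-- `v` is a private neighbour of `u` with respect to the dominating set `D`: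
`N[v] ∩ D = {u}`. -/
def IsPrivateNbr {V : Type*} (G : SimpleGraph V) (D : Set V) (u v : V) : Prop :=
  (insert v (G.neighborSet v)) ∩ D = {u}

/-- A stable (independent) set of vertices. -/
def IsStable {V : Type*} (G : SimpleGraph V) (S : Set V) : Prop :=
  S.Pairwise fun u v => ¬ G.Adj u v

namespace SimpleGraph

variable {V W : Type*} {G : SimpleGraph V} {H : SimpleGraph W}

theorem nonempty_embedding_of_adj_of_compl_adj (φ : W → V)
    (hadj : ∀ x y, H.Adj x y → G.Adj (φ x) (φ y))
    (hcompl : ∀ x y, Hᶜ.Adj x y → Gᶜ.Adj (φ x) (φ y)) : Nonempty (H ↪g G) := by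
  have hrefl : ∀ {x y}, G.Adj (φ x) (φ y) → H.Adj x y := fun {x y} h => by
    by_contra hxy
    have hne : x ≠ y := by rintro rfl; exact G.irrefl h
    exact (hcompl x y ⟨hne, hxy⟩).2 h
  refine ⟨⟨⟨φ, fun x y hxy => ?_⟩, ⟨hrefl, hadj _ _⟩⟩⟩
  by_contra hne
  by_cases h : H.Adj x y
  · exact G.irrefl (hxy ▸ hadj x y h)
  · exact (hcompl x y ⟨hne, h⟩).1 hxy

theorem dist_le_two {u v w : V} (huv : G.Adj u v) (hvw : G.Adj v w) : G.dist u w ≤ 2 :=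
  dist_le (.cons huv (.cons hvw .nil))

theorem compl_adj_of_two_le_dist {u v : V} (h : 2 ≤ G.dist u v) : Gᶜ.Adj u v :=
  ⟨by rintro rfl; simp at h, fun huv => by rw [dist_eq_one_iff_adj.2 huv] at h; omega⟩

theorem Connected.exists_adj_adj_of_dist_eq_two (hconn : G.Connected) {u v : V}
    (h : G.dist u v = 2) : ∃ w, G.Adj u w ∧ G.Adj w v := by
  obtain ⟨p, hp⟩ := hconn.exists_walk_length_eq_dist u v
  refine ⟨p.getVert 1, ?_, ?_⟩
  · simpa using p.adj_getVert_succ (i := 0) (by omega)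
  · simpa [p.getVert_of_length_le (i := 2) (by omega)] using
      p.adj_getVert_succ (i := 1) (by omega)

theorem Connected.exists_adj_adj_adj_of_dist_eq_three (hconn : G.Connected) {u v : V}
    (h : G.dist u v = 3) : ∃ x y, G.Adj u x ∧ G.Adj x y ∧ G.Adj y v := by
  obtain ⟨p, hp⟩ := hconn.exists_walk_length_eq_dist u v
  refine ⟨p.getVert 1, p.getVert 2, ?_, p.adj_getVert_succ (i := 1) (by omega), ?_⟩
  · simpa using p.adj_getVert_succ (i := 0) (by omega)
  · simpa [p.getVert_of_length_le (i := 3) (by omega)] using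
      p.adj_getVert_succ (i := 2) (by omega)

end SimpleGraph

section

variable {V : Type*} {G : SimpleGraph V}

@[simp]
theorem P3kP2_adj_inl_inl {k : ℕ} {a b : Fin 3} :
    (P3kP2 k).Adj (.inl a) (.inl b) ↔ (b : ℕ) = a + 1 ∨ (a : ℕ) = b + 1 := by
  simp only [P3kP2, fromRel_adj, ne_eq, Sum.inl.injEq, and_iff_right_iff_imp]
  omega

@[simp]
theorem P3kP2_adj_inr_inr {k : ℕ} {p q : Fin k × Fin 2} :
    (P3kP2 k).Adj (.inr p) (.inr q) ↔ p.1 = q.1 ∧ p.2 ≠ q.2 := by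
  simp only [P3kP2, fromRel_adj]
  grind

@[simp]
theorem P3kP2_not_adj_inl_inr {k : ℕ} {a : Fin 3} {p : Fin k × Fin 2} :
    ¬ (P3kP2 k).Adj (.inl a) (.inr p) := by
  simp [P3kP2]

@[simp]
theorem P3kP2_not_adj_inr_inl {k : ℕ} {a : Fin 3} {p : Fin k × Fin 2} :
    ¬ (P3kP2 k).Adj (.inr p) (.inl a) := by
  simp [P3kP2]

theorem nonempty_P3kP2_embedding {k : ℕ} (p : Fin 3 → V) (e : Fin k → Fin 2 → V)
    (hp₀₁ : G.Adj (p 0) (p 1)) (hp₁₂ : G.Adj (p 1) (p 2)) (hp₀₂ : Gᶜ.Adj (p 0) (p 2))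
    (he : ∀ i, G.Adj (e i 0) (e i 1)) (hpe : ∀ a i s, Gᶜ.Adj (p a) (e i s))
    (hee : ∀ i j, i ≠ j → ∀ s t, Gᶜ.Adj (e i s) (e j t)) :
    Nonempty (P3kP2 k ↪g G) := by
  refine nonempty_embedding_of_adj_of_compl_adj (Sum.elim p fun z => e z.1 z.2) ?_ ?_
  · rintro (a | ⟨i, s⟩) (b | ⟨j, t⟩) h
    · fin_cases a <;> fin_cases b <;> simp [hp₀₁, hp₀₁.symm, hp₁₂, hp₁₂.symm] at h ⊢
    · simp at h
    · simp at h
    · obtain ⟨rfl, hst⟩ := P3kP2_adj_inr_inr.1 h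
      fin_cases s <;> fin_cases t <;> simp [he i, (he i).symm] at hst ⊢
  · rintro (a | ⟨i, s⟩) (b | ⟨j, t⟩) h
    · fin_cases a <;> fin_cases b <;> simp [compl_adj, hp₀₂, hp₀₂.symm] at h ⊢
    · exact hpe a j t
    · exact (hpe b i s).symm
    · by_cases hij : i = j
      · subst hij
        fin_cases s <;> fin_cases t <;> simp [compl_adj] at h
      · exact hee i j hij s t

theorem exists_neighborSet_subset_of_dist_eq_two {k : ℕ} (hconn : G.Connected)
    (hfree : HFree G (P3kP2 k)) {c t : V} {a : Fin k → V}
    (hca : ∀ i, 4 ≤ G.dist c (a i)) (haa : ∀ i j, i ≠ j → 4 ≤ G.dist (a i) (a j))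
    (hct : G.dist c t = 2) : ∃ i, G.neighborSet (a i) ⊆ G.neighborSet t := by
  -- Otherwise pick `vᵢ ∈ N(aᵢ) \ N(t)`: the path `c m t` and the edges `aᵢvᵢ` induce `P3 + kP2`,
  -- all the required non-adjacencies following from the triangle inequality.
  by_contra! hno
  simp only [Set.not_subset, mem_neighborSet] at hno
  choose v hav hvt using hno
  obtain ⟨m, hcm, hmt⟩ := hconn.exists_adj_adj_of_dist_eq_two hct
  have tri : ∀ x y z, G.dist x z ≤ G.dist x y + G.dist y z := fun _ _ _ => hconn.dist_triangle
  have hav₁ : ∀ i, G.dist (a i) (v i) = 1 := fun i => dist_eq_one_iff_adj.2 (hav i)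
  have hva₁ : ∀ i, G.dist (v i) (a i) = 1 := fun i => dist_eq_one_iff_adj.2 (hav i).symm
  have hcm₁ : G.dist c m = 1 := dist_eq_one_iff_adj.2 hcm
  refine (nonempty_P3kP2_embedding ![c, m, t] (fun i => ![a i, v i]) hcm hmt
    (compl_adj_of_two_le_dist hct.ge) hav ?_ ?_).elim hfree.false
  · intro b i s
    have := hca i
    have := hva₁ i
    have := tri c (v i) (a i)
    have := tri c m (a i)
    have := tri m (v i) (a i)
    have := tri c t (a i)
    fin_cases b <;> fin_cases s <;> simp only [Fin.zero_eta, Fin.mk_one, Fin.reduceFinMk,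
      Matrix.cons_val]
    all_goals first
      | exact compl_adj_of_two_le_dist (by omega)
      | exact ⟨by rintro rfl; omega, hvt i⟩
  · intro i j hij s t
    have := haa i j hij
    have := hav₁ i
    have := hva₁ j
    have := tri (a i) (v j) (a j)
    have := tri (a i) (v i) (a j)
    have := tri (v i) (v j) (a j)
    fin_cases s <;> fin_cases t <;> simp only [Fin.zero_eta, Fin.mk_one,
      Matrix.cons_val] <;> exact compl_adj_of_two_le_dist (by omega)

theorem not_adj_of_forall_two_le_dist {k : ℕ} (hk : 1 ≤ k) (hfree : HFree G (P3kP2 k))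
    (f : P3kP2 (k - 1) ↪g G) {x y : V} (hx : ∀ s, 2 ≤ G.dist x (f s))
    (hy : ∀ s, 2 ≤ G.dist y (f s)) : ¬ G.Adj x y := by
  intro hxy
  obtain ⟨m, rfl⟩ : ∃ m, k = m + 1 := ⟨k - 1, by omega⟩
  have hfar : ∀ r s, Gᶜ.Adj (f s) (![x, y] r) := by
    intro r s
    refine (compl_adj_of_two_le_dist ?_).symm
    fin_cases r
    exacts [hx s, hy s]
  refine (nonempty_P3kP2_embedding (fun a => f (.inl a))
    (Fin.snoc (α := fun _ => Fin 2 → V) (fun i s => f (.inr (i, s))) ![x, y])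
    (by simp) (by simp) (by simp)
    ?_ ?_ ?_).elim hfree.false
  · intro i
    induction i using Fin.lastCases with
    | last => simp [hxy]
    | cast i => simp
  · intro a i s
    induction i using Fin.lastCases with
    | last => simp [hfar s (.inl a)]
    | cast i => simp
  · intro i j hij s t
    induction i using Fin.lastCases with
    | last =>
      induction j using Fin.lastCases with
      | last => exact absurd rfl hij
      | cast j => simpa using (hfar s _).symm
    | cast i =>
      induction j using Fin.lastCases with
      | last => simpa using hfar t _
      | cast j =>
        have hij : i ≠ j := fun h => hij (h ▸ rfl)
        simp [hij]

theorem distToSet_le_dist {v a : V} {A : Set V} (ha : a ∈ A) : distToSet G v A ≤ G.dist v a :=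
  Nat.sInf_le ⟨a, ha, rfl⟩

theorem exists_dist_eq_distToSet (v : V) {A : Set V} (hA : A.Nonempty) :
    ∃ a ∈ A, G.dist v a = distToSet G v A :=
  Nat.sInf_mem (hA.image _)

theorem two_le_dist_of_mem_cliqueDistTwo {A : Set V} {c a : V} (hc : c ∈ cliqueDistTwo G A)
    (ha : a ∈ A) : 2 ≤ G.dist c a :=
  hc.1 ▸ distToSet_le_dist ha

theorem exists_adj_adj_of_mem_cliqueDistTwo (hconn : G.Connected) {A : Set V}
    (hA : A.Nonempty) {c : V} (hc : c ∈ cliqueDistTwo G A) :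
    ∃ u, G.Adj c u ∧ ∃ a ∈ A, G.Adj u a := by
  obtain ⟨a, ha, hca⟩ := exists_dist_eq_distToSet c hA
  obtain ⟨u, hcu, hua⟩ := hconn.exists_adj_adj_of_dist_eq_two (hca.trans hc.1)
  exact ⟨u, hcu, a, ha, hua⟩

theorem not_adj_of_mem_cliqueDistTwo {k : ℕ} (hk : 1 ≤ k) (hfree : HFree G (P3kP2 k))
    (f : P3kP2 (k - 1) ↪g G) {v w : V} (hv : v ∈ cliqueDistTwo G (Set.range f))
    (hw : w ∈ cliqueDistTwo G (Set.range f)) : ¬ G.Adj v w :=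
  not_adj_of_forall_two_le_dist hk hfree f
    (fun _ => two_le_dist_of_mem_cliqueDistTwo hv ⟨_, rfl⟩)
    (fun _ => two_le_dist_of_mem_cliqueDistTwo hw ⟨_, rfl⟩)

theorem IsDomSet.insert_diff_singleton {D : Set V} (hD : IsDomSet G D) {c u : V}
    (hc : G.IsClique (G.neighborSet c)) (hcu : G.Adj c u) : IsDomSet G (insert u (D \ {c})) := by
  intro t ht
  obtain ⟨htu, htD⟩ : t ≠ u ∧ t ∉ D \ {c} := by simpa only [Set.mem_insert_iff, not_or] using ht
  by_cases htc : t = c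
  · exact ⟨u, .inl rfl, htc ▸ hcu.symm⟩
  obtain ⟨d, hdD, hdt⟩ := hD t fun h => htD ⟨h, htc⟩
  by_cases hdc : d = c
  · subst hdc
    exact ⟨u, .inl rfl, hc hcu hdt (Ne.symm htu)⟩
  · exact ⟨d, .inr ⟨hdD, hdc⟩, hdt⟩

theorem IsMinDomSet.of_ncard_le {D D' : Set V} (hD : IsMinDomSet G D) (hD' : IsDomSet G D')
    (h : D'.ncard ≤ D.ncard) : IsMinDomSet G D' :=
  ⟨hD', fun E hE => h.trans (hD.2 E hE)⟩

theorem exists_isMinDomSet [Finite V] (G : SimpleGraph V) : ∃ D, IsMinDomSet G D := by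
  obtain ⟨D, hD, hmin⟩ := Set.exists_min_image {D | IsDomSet G D} Set.ncard (Set.toFinite _)
    ⟨Set.univ, fun v hv => (hv trivial).elim⟩
  exact ⟨D, hD, hmin⟩

theorem exists_isMinDomSet_forall_ncard_inter_le [Finite V] (G : SimpleGraph V) (B : Set V) :
    ∃ D, IsMinDomSet G D ∧ ∀ D', IsMinDomSet G D' → (D' ∩ B).ncard ≤ (D ∩ B).ncard :=
  Set.exists_max_image {D | IsMinDomSet G D} (fun D => (D ∩ B).ncard) (Set.toFinite _)
    (exists_isMinDomSet G)

theorem IsMinDomSet.notMem_of_isClique_neighborSet [Finite V] {D B : Set V}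
    (hmin : IsMinDomSet G D) (hstab : IsStable G D)
    (hmax : ∀ D', IsMinDomSet G D' → (D' ∩ B).ncard ≤ (D ∩ B).ncard) {c u : V}
    (hc : G.IsClique (G.neighborSet c)) (hcB : c ∉ B) (hcu : G.Adj c u) (huB : u ∈ B) :
    c ∉ D := by
  intro hcD
  have huD : u ∉ D := fun huD => hstab hcD huD hcu.ne hcu
  have hmin' : IsMinDomSet G (insert u (D \ {c})) :=
    hmin.of_ncard_le (hmin.1.insert_diff_singleton hc hcu) <| by
      rw [Set.ncard_insert_of_notMem (fun h => huD h.1), Set.ncard_sdiff_singleton_add_one hcD]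
  have hsub : D ∩ B ⊆ insert u (D \ {c}) ∩ B := fun z hz =>
    ⟨.inr ⟨hz.1, by rintro rfl; exact hcB hz.2⟩, hz.2⟩
  have hssub := (Set.ssubset_iff_of_subset hsub).2 ⟨u, ⟨.inl rfl, huB⟩, fun h => huD h.1⟩
  exact (Set.ncard_lt_ncard hssub).not_ge (hmax _ hmin')

theorem IsMinDomSet.notMem_cliqueDistTwo [Finite V] (hconn : G.Connected) {A D : Set V}
    (hA : A.Nonempty) (hmin : IsMinDomSet G D) (hstab : IsStable G D)
    (hmax : ∀ D', IsMinDomSet G D' →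
      (D' ∩ {z | ∃ a ∈ A, G.Adj z a}).ncard ≤ (D ∩ {z | ∃ a ∈ A, G.Adj z a}).ncard)
    {c : V} (hc : c ∈ cliqueDistTwo G A) : c ∉ D := by
  obtain ⟨u, hcu, huB⟩ := exists_adj_adj_of_mem_cliqueDistTwo hconn hA hc
  refine hmin.notMem_of_isClique_neighborSet hstab hmax hc.2 ?_ hcu huB
  rintro ⟨a, ha, hca⟩
  have := two_le_dist_of_mem_cliqueDistTwo hc ha
  rw [dist_eq_one_iff_adj.2 hca] at this
  omega

theorem ncard_insert_insert_diff_pair_le [Finite V] {D : Set V} {d e : V} (hd : d ∈ D)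
    (he : e ∈ D) (hde : d ≠ e) (x y : V) : (insert x (insert y (D \ {d, e}))).ncard ≤ D.ncard := by
  have h := Set.ncard_sdiff_add_ncard_of_subset (s := {d, e}) (t := D)
    (by simp [Set.insert_subset_iff, hd, he])
  rw [Set.ncard_pair hde] at h
  have := Set.ncard_insert_le x (insert y (D \ {d, e}))
  have := Set.ncard_insert_le y (D \ {d, e})
  omega

theorem exists_mem_adj_adj_of_dist_eq_two {k : ℕ} (hconn : G.Connected)
    (hfree : HFree G (P3kP2 k)) {D : Set V} (hD : IsDomSet G D) {c t : V} {a : Fin k → V}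
    (hca : ∀ i, 4 ≤ G.dist c (a i)) (haa : ∀ i j, i ≠ j → 4 ≤ G.dist (a i) (a j))
    (haD : ∀ i, a i ∉ D) (hct : G.dist c t = 2) : ∃ i, ∃ g ∈ D, G.Adj g t ∧ G.Adj g (a i) := by
  obtain ⟨i, hi⟩ := exists_neighborSet_subset_of_dist_eq_two hconn hfree hca haa hct
  obtain ⟨g, hgD, hga⟩ := hD (a i) (haD i)
  exact ⟨i, g, hgD, (hi hga.symm).symm, hga⟩

theorem exists_mem_adj_ne_ne_of_isRegularVertex {k : ℕ} (hconn : G.Connected)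
    (hfree : HFree G (P3kP2 k)) {A D : Set V} (hD : IsDomSet G D) (hstab : IsStable G D)
    (hCD : ∀ v ∈ cliqueDistTwo G A, v ∉ D)
    (hCadj : ∀ v ∈ cliqueDistTwo G A, ∀ w ∈ cliqueDistTwo G A, ¬ G.Adj v w)
    {c c' : V} (hc : IsRegularVertex G k A c) (hc' : IsRegularVertex G k A c')
    (hcc' : G.dist c c' = 3) {d e t : V} (he : e ∈ D) (hdc : G.Adj d c) (hec' : G.Adj e c')
    (hdt : G.Adj d t) (hct : 2 ≤ G.dist c t) : ∃ g ∈ D, G.Adj g t ∧ g ≠ d ∧ g ≠ e := by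
  obtain ⟨-, a, haC, hca, haa⟩ := hc
  obtain ⟨hc'C, b, hbC, hc'b, hbb⟩ := hc'
  obtain ⟨i, g, hgD, hgt, hga⟩ := exists_mem_adj_adj_of_dist_eq_two hconn hfree hD hca haa
    (fun i => hCD _ (haC i)) (le_antisymm (dist_le_two hdc.symm hdt) hct)
  have hcai := hca i
  refine ⟨g, hgD, hgt, ?_, ?_⟩
  · rintro rfl
    have := dist_le_two hdc.symm hga
    omega
  rintro rfl
  have hc'a : G.dist c' (a i) = 2 := by
    refine le_antisymm (dist_le_two hec'.symm hga) (hconn.one_lt_dist_of_ne_of_not_adj ?_ ?_)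
    · rintro h
      rw [← h] at hcai
      omega
    · exact hCadj _ hc'C _ (haC i)
  obtain ⟨j, h, hhD, hha, hhb⟩ := exists_mem_adj_adj_of_dist_eq_two hconn hfree hD hc'b hbb
    (fun j => hCD _ (hbC j)) hc'a
  have hhg : h ≠ g := by
    rintro rfl
    have := dist_le_two hec'.symm hhb
    have := hc'b j
    omega
  exact hstab hgD hhD hhg.symm ((haC i).2 hga.symm hha.symm hhg.symm)

theorem isDomSet_insert_insert_diff_pair {k : ℕ} (hconn : G.Connected)
    (hfree : HFree G (P3kP2 k)) {A D : Set V} (hD : IsDomSet G D) (hstab : IsStable G D)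
    (hCD : ∀ v ∈ cliqueDistTwo G A, v ∉ D)
    (hCadj : ∀ v ∈ cliqueDistTwo G A, ∀ w ∈ cliqueDistTwo G A, ¬ G.Adj v w)
    {c₁ c₂ : V} (hc₁ : IsRegularVertex G k A c₁) (hc₂ : IsRegularVertex G k A c₂)
    (hc₁₂ : G.dist c₁ c₂ = 3) {d e x y : V} (hdD : d ∈ D) (heD : e ∈ D)
    (hdc : G.Adj d c₁) (hec : G.Adj e c₂) (hx : G.Adj c₁ x) (hy : G.Adj c₂ y) :
    IsDomSet G (insert x (insert y (D \ {d, e}))) := by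
  set D' := insert x (insert y (D \ {d, e}))
  intro t ht
  by_contra! hno
  have hfar : ∀ {c z}, c ∈ cliqueDistTwo G A → G.Adj c z → z ∈ D' → 2 ≤ G.dist c t := by
    intro c z hc hcz hzD'
    refine hconn.one_lt_dist_of_ne_of_not_adj ?_ fun hct => ?_
    · rintro rfl
      exact hno z hzD' hcz.symm
    · by_cases hzt : z = t
      · exact ht (hzt ▸ hzD')
      · exact hno z hzD' (hc.2 hcz hct hzt)
  have hc₁t := hfar hc₁.1 hx (.inl rfl)
  have hc₂t := hfar hc₂.1 hy (.inr (.inl rfl))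
  have hnot : ¬ ∃ g ∈ D, G.Adj g t ∧ g ≠ d ∧ g ≠ e := fun ⟨g, hgD, hgt, hgd, hge⟩ =>
    hno g (.inr (.inr ⟨hgD, by simp [hgd, hge]⟩)) hgt
  have htD : t ∉ D := by
    intro htD
    have htd : t ≠ d := by
      rintro rfl
      have := dist_eq_one_iff_adj.2 hdc.symm
      omega
    have hte : t ≠ e := by
      rintro rfl
      have := dist_eq_one_iff_adj.2 hec.symm
      omega
    exact ht (.inr (.inr ⟨htD, by simp [htd, hte]⟩))
  obtain ⟨g, hgD, hgt⟩ := hD t htD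
  by_cases hgd : g = d
  · subst hgd
    exact hnot (exists_mem_adj_ne_ne_of_isRegularVertex hconn hfree hD hstab hCD hCadj hc₁ hc₂
      hc₁₂ heD hdc hec hgt hc₁t)
  by_cases hge : g = e
  · subst hge
    obtain ⟨g', hg'D, hg't, hg'e, hg'd⟩ := exists_mem_adj_ne_ne_of_isRegularVertex hconn hfree hD
      hstab hCD hCadj hc₂ hc₁ (by rw [SimpleGraph.dist_comm, hc₁₂]) hdD hec hdc hgt hc₂t
    exact hnot ⟨g', hg'D, hg't, hg'd, hg'e⟩
  exact hnot ⟨g, hgD, hgt, hgd, hge⟩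

end

theorem stmt6
    {V : Type*} [Fintype V] (k : ℕ) (hk : 1 ≤ k) (G : SimpleGraph V)
    (hconn : G.Connected) (hfree : HFree G (P3kP2 k))
    (A : Set V) (hA : ∃ f : P3kP2 (k-1) ↪g G, Set.range f = A)
    (c₁ c₂ : V) (h₁ : IsRegularVertex G k A c₁) (h₂ : IsRegularVertex G k A c₂)
    (hd : G.dist c₁ c₂ = 3) :
    ∃ D : Set V, IsMinDomSet G D ∧ ¬ IsStable G D := by
  obtain ⟨f, rfl⟩ := hA
  obtain ⟨D, hmin, hmax⟩ :=
    exists_isMinDomSet_forall_ncard_inter_le G {z | ∃ a ∈ Set.range f, G.Adj z a}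
  by_cases hstab : IsStable G D
  swap
  · exact ⟨D, hmin, hstab⟩
  have hCD : ∀ c ∈ cliqueDistTwo G (Set.range f), c ∉ D := fun _ hc =>
    hmin.notMem_cliqueDistTwo hconn (Set.range_nonempty f) hstab hmax hc
  obtain ⟨d, hdD, hdc⟩ := hmin.1 c₁ (hCD c₁ h₁.1)
  obtain ⟨e, heD, hec⟩ := hmin.1 c₂ (hCD c₂ h₂.1)
  obtain ⟨x, y, hc₁x, hxy, hyc₂⟩ := hconn.exists_adj_adj_adj_of_dist_eq_three hd
  have hde : d ≠ e := by
    rintro rfl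
    have := dist_le_two hdc.symm hec
    omega
  have hdom := isDomSet_insert_insert_diff_pair hconn hfree hmin.1 hstab hCD
    (fun _ hv _ hw => not_adj_of_mem_cliqueDistTwo hk hfree f hv hw) h₁ h₂ hd hdD heD hdc hec
    hc₁x hyc₂.symm
  refine ⟨_, hmin.of_ncard_le hdom (ncard_insert_insert_diff_pair_le hdD heD hde x y), ?_⟩
  exact fun h => h (.inl rfl) (.inr (.inl rfl)) hxy.ne hxy
end

section
/- Let k ≥ 1, let G be a finite connected simple graph that is (P3+kP2)-free and contains a vertex set A inducing P3+(k-1)P2, and assume that every minimum dominating set of G is a stable set. Let D be a minimum dominating set of G. If there are at least |A| vertices in B ∩ D which have no private neighbour in C with respect to D, then |B ∩ D| ≤ (k+1)·|A| − 1. -/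
open SimpleGraph

lemma p3_adj_inr_inr {k : ℕ} (i j : Fin k) (b c : Fin 2) :
    (P3kP2 k).Adj (Sum.inr (i, b)) (Sum.inr (j, c)) ↔ i = j ∧ b ≠ c := by
  simp only [P3kP2, fromRel_adj]
  constructor
  · rintro ⟨hne, h | h⟩
    · exact ⟨h.1, h.2⟩
    · exact ⟨h.1.symm, h.2.symm⟩
  · rintro ⟨h1, h2⟩
    exact ⟨by simp [h1, h2, Prod.ext_iff], Or.inl ⟨h1, h2⟩⟩

@[simp] lemma p3_adj_inl_inr {k : ℕ} (a : Fin 3) (q : Fin k × Fin 2) :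
    ¬ (P3kP2 k).Adj (Sum.inl a) (Sum.inr q) := by
  simp [P3kP2, fromRel_adj]

@[simp] lemma p3_adj_inr_inl {k : ℕ} (a : Fin 3) (q : Fin k × Fin 2) :
    ¬ (P3kP2 k).Adj (Sum.inr q) (Sum.inl a) := by
  simp [P3kP2, fromRel_adj]

lemma p3_adj_inl_inl {k : ℕ} (a b : Fin 3) :
    (P3kP2 k).Adj (Sum.inl a) (Sum.inl b) ↔
      ((a : ℕ) = (b : ℕ) + 1 ∨ (b : ℕ) = (a : ℕ) + 1) := by
  simp only [P3kP2, fromRel_adj]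
  constructor
  · rintro ⟨hne, h | h⟩
    · exact Or.inr h
    · exact Or.inl h
  · rintro (h | h)
    · refine ⟨fun he => ?_, Or.inr h⟩
      rw [Sum.inl.injEq] at he; subst he; omega
    · refine ⟨fun he => ?_, Or.inl h⟩
      rw [Sum.inl.injEq] at he; subst he; omega

lemma fin2_eq_one {b : Fin 2} (h : ¬ b = 0) : b = 1 := by
  fin_cases b
  · exact absurd rfl h
  · rfl

section Boom
variable {V : Type*} {G : SimpleGraph V} {k : ℕ} {C D : Set V}

/-- The main "pattern" lemma: a P3 `σ - c0 - σ'` together with `k` pairwise anticomplete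
pairs `(u i, w i)` tagged by pairwise disjoint sets `Tg i ⊆ D` yields an induced
`P3 + k P2`, contradicting freeness. -/
lemma boom (hfree : HFree G (P3kP2 k))
    (hstab : ∀ x ∈ D, ∀ y ∈ D, x ≠ y → ¬ G.Adj x y)
    (hCind : ∀ x ∈ C, ∀ y ∈ C, ¬ G.Adj x y)
    (c0 σ σ' : V) (hc0C : c0 ∈ C) (hc0D : c0 ∉ D)
    (hσD : σ ∈ D) (hσ'D : σ' ∈ D) (hσσ' : σ ≠ σ')
    (hσadj : G.Adj c0 σ) (hσ'adj : G.Adj c0 σ')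
    (u w : Fin k → V) (Tg : Fin k → Set V)
    (hTgD : ∀ i, Tg i ⊆ D)
    (hdisj : ∀ i j, i ≠ j → Disjoint (Tg i) (Tg j))
    (hTgc0 : ∀ i, ∀ d ∈ Tg i, ¬ G.Adj c0 d)
    (hu : ∀ i, u i ∈ Tg i)
    (huw : ∀ i, G.Adj (u i) (w i))
    (hwC : ∀ i, w i ∈ C) (hwD : ∀ i, w i ∉ D)
    (hwN : ∀ i, ∀ d ∈ D, G.Adj (w i) d → d ∈ Tg i) : False := by
  -- derived facts
  have hσT : ∀ i, σ ∉ Tg i := fun i hmem => hTgc0 i σ hmem hσadj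
  have hσ'T : ∀ i, σ' ∉ Tg i := fun i hmem => hTgc0 i σ' hmem hσ'adj
  have huD : ∀ i, u i ∈ D := fun i => hTgD i (hu i)
  have hσu : ∀ i, ¬ G.Adj σ (u i) := by
    intro i hadj
    rcases eq_or_ne σ (u i) with h | h
    · exact G.irrefl (h ▸ hadj)
    · exact hstab σ hσD (u i) (huD i) h hadj
  have hσ'u : ∀ i, ¬ G.Adj σ' (u i) := by
    intro i hadj
    rcases eq_or_ne σ' (u i) with h | h
    · exact G.irrefl (h ▸ hadj)
    · exact hstab σ' hσ'D (u i) (huD i) h hadj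
  have hσw : ∀ i, ¬ G.Adj σ (w i) := fun i hadj => hσT i (hwN i σ hσD hadj.symm)
  have hσ'w : ∀ i, ¬ G.Adj σ' (w i) := fun i hadj => hσ'T i (hwN i σ' hσ'D hadj.symm)
  have hc0u : ∀ i, ¬ G.Adj c0 (u i) := fun i => hTgc0 i (u i) (hu i)
  have hc0w : ∀ i, ¬ G.Adj c0 (w i) := fun i => hCind c0 hc0C (w i) (hwC i)
  have huu : ∀ i j, i ≠ j → ¬ G.Adj (u i) (u j) := by
    intro i j hij hadj
    have hne : u i ≠ u j := by
      intro h
      exact (hdisj i j hij).ne_of_mem (hu i) (hu j) h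
    exact hstab (u i) (huD i) (u j) (huD j) hne hadj
  have huw' : ∀ i j, i ≠ j → ¬ G.Adj (u i) (w j) := by
    intro i j hij hadj
    have hmem : u i ∈ Tg j := hwN j (u i) (huD i) hadj.symm
    exact (hdisj i j hij).ne_of_mem (hu i) hmem rfl
  have hww : ∀ i j, ¬ G.Adj (w i) (w j) := fun i j =>
    hCind (w i) (hwC i) (w j) (hwC j)
  have hwne : ∀ i j, i ≠ j → w i ≠ w j := by
    intro i j hij h
    have hadj : G.Adj (w j) (u i) := by rw [← h]; exact (huw i).symm
    have hmem : u i ∈ Tg j := hwN j (u i) (huD i) hadj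
    exact (hdisj i j hij).ne_of_mem (hu i) hmem rfl
  have hune : ∀ i j, i ≠ j → u i ≠ u j := by
    intro i j hij h
    exact (hdisj i j hij).ne_of_mem (hu i) (hu j) h
  have hc0w' : ∀ i, c0 ≠ w i := by
    intro i h
    have hadj : G.Adj (w i) σ := by rw [← h]; exact hσadj
    exact hσT i (hwN i σ hσD hadj)
  have hσune : ∀ i, σ ≠ u i := fun i h => hσT i (Set.mem_of_eq_of_mem h (hu i))
  have hσ'une : ∀ i, σ' ≠ u i := fun i h => hσ'T i (Set.mem_of_eq_of_mem h (hu i))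
  have hc0une : ∀ i, c0 ≠ u i := fun i h => hc0D (Set.mem_of_eq_of_mem h (huD i))
  have hσwne : ∀ i, σ ≠ w i := fun i h => hwD i (Set.mem_of_eq_of_mem h.symm hσD)
  have hσ'wne : ∀ i, σ' ≠ w i := fun i h => hwD i (Set.mem_of_eq_of_mem h.symm hσ'D)
  have hσc0 : σ ≠ c0 := fun h => hc0D (Set.mem_of_eq_of_mem h.symm hσD)
  have hσ'c0 : σ' ≠ c0 := fun h => hc0D (Set.mem_of_eq_of_mem h.symm hσ'D)
  have huwne : ∀ i j, u i ≠ w j := fun i j h => hwD j (Set.mem_of_eq_of_mem h.symm (huD i))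
  -- the vertex map
  set F : Fin 3 ⊕ Fin k × Fin 2 → V :=
    Sum.elim (fun a => ![σ, c0, σ'] a) (fun q => if q.2 = 0 then u q.1 else w q.1) with hF
  have hFinj : Function.Injective F := by
    rintro (a | ⟨i, b⟩) (a' | ⟨i', b'⟩) h <;>
      simp only [F, Sum.elim_inl, Sum.elim_inr] at h
    · congr 1
      fin_cases a <;> fin_cases a' <;>
        first
          | rfl
          | exact absurd h hσσ'
          | exact absurd h hσσ'.symm
          | exact absurd h hσc0
          | exact absurd h hσc0.symm
          | exact absurd h hσ'c0
          | exact absurd h hσ'c0.symm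
    · exfalso
      fin_cases a <;> split_ifs at h with hb <;>
        first
          | exact hσune i' h
          | exact hσwne i' h
          | exact hc0une i' h
          | exact hc0w' i' h
          | exact hσ'une i' h
          | exact hσ'wne i' h
    · exfalso
      fin_cases a' <;> split_ifs at h with hb <;>
        first
          | exact hσune i h.symm
          | exact hσwne i h.symm
          | exact hc0une i h.symm
          | exact hc0w' i h.symm
          | exact hσ'une i h.symm
          | exact hσ'wne i h.symm
    · split_ifs at h with hb hb' hb'
      · rcases eq_or_ne i i' with hii | hii
        · subst hii; rw [hb, hb']
        · exact absurd h (hune i i' hii)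
      · exact absurd h (huwne i i')
      · exact absurd h.symm (huwne i' i)
      · rcases eq_or_ne i i' with hii | hii
        · subst hii; rw [fin2_eq_one hb, fin2_eq_one hb']
        · exact absurd h (hwne i i' hii)
  refine hfree.elim ⟨⟨F, hFinj⟩, ?_⟩
  rintro (a | ⟨i, b⟩) (a' | ⟨i', b'⟩) <;>
    simp only [Function.Embedding.coeFn_mk, F, Sum.elim_inl, Sum.elim_inr]
  · fin_cases a <;> fin_cases a' <;>
      first
        | exact iff_of_false G.irrefl (fun h => by
            rcases (p3_adj_inl_inl _ _).mp h with h' | h' <;> exact absurd h' (by decide))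
        | exact iff_of_true hσadj.symm ((p3_adj_inl_inl _ _).mpr (by decide))
        | exact iff_of_true hσadj ((p3_adj_inl_inl _ _).mpr (by decide))
        | exact iff_of_true hσ'adj ((p3_adj_inl_inl _ _).mpr (by decide))
        | exact iff_of_true hσ'adj.symm ((p3_adj_inl_inl _ _).mpr (by decide))
        | exact iff_of_false (hstab σ hσD σ' hσ'D hσσ') (fun h => by
            rcases (p3_adj_inl_inl _ _).mp h with h' | h' <;> exact absurd h' (by decide))
        | exact iff_of_false (hstab σ' hσ'D σ hσD hσσ'.symm) (fun h => by
            rcases (p3_adj_inl_inl _ _).mp h with h' | h' <;> exact absurd h' (by decide))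
  · fin_cases a <;> split_ifs with hb <;>
      first
        | exact iff_of_false (hσu i') (p3_adj_inl_inr _ _)
        | exact iff_of_false (hσw i') (p3_adj_inl_inr _ _)
        | exact iff_of_false (hc0u i') (p3_adj_inl_inr _ _)
        | exact iff_of_false (hc0w i') (p3_adj_inl_inr _ _)
        | exact iff_of_false (hσ'u i') (p3_adj_inl_inr _ _)
        | exact iff_of_false (hσ'w i') (p3_adj_inl_inr _ _)
  · fin_cases a' <;> split_ifs with hb <;>
      first
        | exact iff_of_false (fun h => hσu i h.symm) (p3_adj_inr_inl _ _)
        | exact iff_of_false (fun h => hσw i h.symm) (p3_adj_inr_inl _ _)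
        | exact iff_of_false (fun h => hc0u i h.symm) (p3_adj_inr_inl _ _)
        | exact iff_of_false (fun h => hc0w i h.symm) (p3_adj_inr_inl _ _)
        | exact iff_of_false (fun h => hσ'u i h.symm) (p3_adj_inr_inl _ _)
        | exact iff_of_false (fun h => hσ'w i h.symm) (p3_adj_inr_inl _ _)
  · rw [p3_adj_inr_inr]
    split_ifs with hb hb' hb'
    · constructor
      · intro h
        exfalso
        rcases eq_or_ne i i' with hii | hii
        · subst hii; exact G.irrefl h
        · exact huu i i' hii h
      · rintro ⟨rfl, hne⟩
        exact absurd (hb.trans hb'.symm) hne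
    · constructor
      · intro h
        rcases eq_or_ne i i' with hii | hii
        · exact ⟨hii, fun hbc => hb' (hbc.symm.trans hb)⟩
        · exact absurd h (huw' i i' hii)
      · rintro ⟨rfl, _⟩
        exact huw i
    · constructor
      · intro h
        rcases eq_or_ne i i' with hii | hii
        · exact ⟨hii, fun hbc => hb (hbc.trans hb')⟩
        · exact absurd h.symm (huw' i' i hii.symm)
      · rintro ⟨rfl, _⟩
        exact (huw i).symm
    · constructor
      · intro h
        exact absurd h (hww i i')
      · rintro ⟨rfl, hne⟩
        exact absurd ((fin2_eq_one hb).trans (fin2_eq_one hb').symm) hne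

end Boom

section Dist
variable {V : Type*} {G : SimpleGraph V} {A : Set V} {v : V}

lemma distToSet_exists (hA : A.Nonempty) (v : V) :
    ∃ a ∈ A, G.dist v a = distToSet G v A := by
  have hne : ((G.dist v) '' A).Nonempty := hA.image _
  have hmem := Nat.sInf_mem hne
  obtain ⟨a, haA, ha⟩ := hmem
  exact ⟨a, haA, ha⟩

lemma distToSet_le {a : V} (ha : a ∈ A) : distToSet G v A ≤ G.dist v a :=
  Nat.sInf_le ⟨a, ha, rfl⟩

lemma distToSet_eq_zero_of_mem (hv : v ∈ A) : distToSet G v A = 0 :=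
  Nat.le_zero.mp (by simpa [SimpleGraph.dist_self] using distToSet_le (G := G) (v := v) hv)

lemma mem_of_distToSet_eq_zero (hconn : G.Connected) (hA : A.Nonempty)
    (h : distToSet G v A = 0) : v ∈ A := by
  obtain ⟨a, haA, ha⟩ := distToSet_exists (G := G) hA v
  rw [h] at ha
  rwa [(hconn.dist_eq_zero_iff).mp ha]

lemma adj_of_distToSet_eq_one (hA : A.Nonempty) (h : distToSet G v A = 1) :
    ∃ a ∈ A, G.Adj v a := by
  obtain ⟨a, haA, ha⟩ := distToSet_exists (G := G) hA v
  rw [h] at ha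
  exact ⟨a, haA, SimpleGraph.dist_eq_one_iff_adj.mp ha⟩

lemma not_adj_of_distToSet_eq_two {a : V} (h : distToSet G v A = 2) (ha : a ∈ A) :
    ¬ G.Adj v a := by
  intro hadj
  have h1 : G.dist v a = 1 := SimpleGraph.dist_eq_one_iff_adj.mpr hadj
  have := distToSet_le (G := G) (v := v) ha
  omega

lemma not_mem_of_distToSet_ne_zero (h : distToSet G v A ≠ 0) : v ∉ A :=
  fun hv => h (distToSet_eq_zero_of_mem hv)

lemma exists_adj_distToSet_pred (hconn : G.Connected) (hA : A.Nonempty)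
    (h : 1 ≤ distToSet G v A) :
    ∃ w, G.Adj v w ∧ distToSet G w A + 1 = distToSet G v A := by
  obtain ⟨a, haA, ha⟩ := distToSet_exists (G := G) hA v
  obtain ⟨p, hp⟩ := (hconn.preconnected v a).exists_walk_length_eq_dist
  cases p with
  | nil => rw [ha] at hp; simp at hp; omega
  | @cons _ w _ hadj q =>
    refine ⟨w, hadj, ?_⟩
    have hq : q.length = G.dist v a - 1 := by
      have := SimpleGraph.Walk.length_cons hadj q
      omega
    have hw1 : distToSet G w A ≤ G.dist v a - 1 := by
      refine le_trans (distToSet_le haA) ?_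
      refine le_trans (SimpleGraph.dist_le q) (le_of_eq hq)
    have hw2 : distToSet G v A ≤ distToSet G w A + 1 := by
      obtain ⟨b, hbA, hb⟩ := distToSet_exists (G := G) hA w
      have hvw : G.dist v w ≤ 1 := by
        have := SimpleGraph.dist_le (SimpleGraph.Walk.cons hadj SimpleGraph.Walk.nil)
        simpa using this
      have htri := hconn.dist_triangle (u := v) (v := w) (w := b)
      have hle := distToSet_le (G := G) (v := v) hbA
      omega
    rw [ha] at *
    omega

end Dist

section FarEdge
variable {V : Type*} {G : SimpleGraph V} {A : Set V} {k : ℕ}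

/-- If `A` carries an induced `P3+(k-1)P2` then no edge of `G` can be anticomplete to `A`. -/
lemma no_far_edge (hk : 1 ≤ k) (hfree : HFree G (P3kP2 k))
    (f : P3kP2 (k-1) ↪g G) (hfA : Set.range ⇑f = A)
    {x y : V} (hxy : G.Adj x y) (hx : x ∉ A) (hy : y ∉ A)
    (hxA : ∀ a ∈ A, ¬ G.Adj x a) (hyA : ∀ a ∈ A, ¬ G.Adj y a) : False := by
  have hmemf : ∀ p, f p ∈ A := fun p => hfA ▸ Set.mem_range_self p
  have hxf : ∀ p, x ≠ f p := fun p h => hx (h ▸ hmemf p)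
  have hyf : ∀ p, y ≠ f p := fun p h => hy (h ▸ hmemf p)
  have hxadj : ∀ p, ¬ G.Adj x (f p) := fun p => hxA _ (hmemf p)
  have hyadj : ∀ p, ¬ G.Adj y (f p) := fun p => hyA _ (hmemf p)
  set F : Fin 3 ⊕ Fin k × Fin 2 → V :=
    Sum.elim (fun a => f (Sum.inl a))
      (fun q => if h : (q.1 : ℕ) < k - 1 then f (Sum.inr (⟨q.1, h⟩, q.2))
                else (if q.2 = 0 then x else y)) with hF
  have hFinj : Function.Injective F := by
    rintro (a | ⟨i, b⟩) (a' | ⟨i', b'⟩) h <;>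
      simp only [F, Sum.elim_inl, Sum.elim_inr] at h
    · rw [Sum.inl.injEq] at *
      exact Sum.inl.inj (f.injective h)
    · exfalso
      split_ifs at h with h1 h2
      · exact absurd (f.injective h) (by simp)
      · exact hxf _ h.symm
      · exact hyf _ h.symm
    · exfalso
      split_ifs at h with h1 h2
      · exact absurd (f.injective h) (by simp)
      · exact hxf _ h
      · exact hyf _ h
    · by_cases h1 : (i : ℕ) < k - 1 <;> by_cases h1' : (i' : ℕ) < k - 1
      · rw [dif_pos h1, dif_pos h1'] at h
        have hinj := f.injective h
        rw [Sum.inr.injEq, Prod.mk.injEq, Fin.mk.injEq] at hinj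
        obtain ⟨hi, hbb⟩ := hinj
        have hii : i = i' := Fin.ext hi
        subst hii; subst hbb; rfl
      · exfalso
        rw [dif_pos h1, dif_neg h1'] at h
        by_cases hb' : b' = 0
        · rw [if_pos hb'] at h; exact hxf _ h.symm
        · rw [if_neg hb'] at h; exact hyf _ h.symm
      · exfalso
        rw [dif_neg h1, dif_pos h1'] at h
        by_cases hb : b = 0
        · rw [if_pos hb] at h; exact hxf _ h
        · rw [if_neg hb] at h; exact hyf _ h
      · rw [dif_neg h1, dif_neg h1'] at h
        have hii : i = i' := Fin.ext (by have := i.isLt; have := i'.isLt; omega)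
        subst hii
        by_cases hb : b = 0 <;> by_cases hb' : b' = 0
        · rw [hb, hb']
        · rw [if_pos hb, if_neg hb'] at h; exact absurd h hxy.ne
        · rw [if_neg hb, if_pos hb'] at h; exact absurd h.symm hxy.ne
        · rw [fin2_eq_one hb, fin2_eq_one hb']
  refine hfree.elim ⟨⟨F, hFinj⟩, ?_⟩
  rintro (a | ⟨i, b⟩) (a' | ⟨i', b'⟩) <;>
    simp only [Function.Embedding.coeFn_mk, F, Sum.elim_inl, Sum.elim_inr]
  · rw [f.map_rel_iff]
    exact (p3_adj_inl_inl _ _).trans (p3_adj_inl_inl _ _).symm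
  · refine iff_of_false ?_ (p3_adj_inl_inr _ _)
    split_ifs with h1 h2
    · rw [f.map_rel_iff]
      exact p3_adj_inl_inr _ _
    · exact fun h => hxadj _ h.symm
    · exact fun h => hyadj _ h.symm
  · refine iff_of_false ?_ (p3_adj_inr_inl _ _)
    split_ifs with h1 h2
    · rw [f.map_rel_iff]
      exact p3_adj_inr_inl _ _
    · exact hxadj _
    · exact hyadj _
  · rw [p3_adj_inr_inr]
    by_cases h1 : (i : ℕ) < k - 1 <;> by_cases h1' : (i' : ℕ) < k - 1
    · rw [dif_pos h1, dif_pos h1', f.map_rel_iff, p3_adj_inr_inr]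
      constructor
      · rintro ⟨hi, hbne⟩
        rw [Fin.mk.injEq] at hi
        exact ⟨Fin.ext hi, hbne⟩
      · rintro ⟨hii, hbne⟩
        refine ⟨?_, hbne⟩
        rw [Fin.mk.injEq]
        exact congrArg Fin.val hii
    · rw [dif_pos h1, dif_neg h1']
      refine iff_of_false ?_ ?_
      · by_cases hb' : b' = 0
        · rw [if_pos hb']; exact fun h => hxadj _ h.symm
        · rw [if_neg hb']; exact fun h => hyadj _ h.symm
      · rintro ⟨hii, _⟩; rw [hii] at h1; exact h1' h1
    · rw [dif_neg h1, dif_pos h1']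
      refine iff_of_false ?_ ?_
      · by_cases hb : b = 0
        · rw [if_pos hb]; exact hxadj _
        · rw [if_neg hb]; exact hyadj _
      · rintro ⟨hii, _⟩; rw [hii] at h1; exact h1 h1'
    · rw [dif_neg h1, dif_neg h1']
      have hii : i = i' := Fin.ext (by have := i.isLt; have := i'.isLt; omega)
      subst hii
      by_cases hb : b = 0 <;> by_cases hb' : b' = 0
      · rw [if_pos hb, if_pos hb']
        exact iff_of_false G.irrefl (by rintro ⟨_, hbne⟩; exact hbne (hb.trans hb'.symm))
      · rw [if_pos hb, if_neg hb']
        exact iff_of_true hxy ⟨rfl, fun hbc => hb' (hbc.symm.trans hb)⟩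
      · rw [if_neg hb, if_pos hb']
        exact iff_of_true hxy.symm ⟨rfl, fun hbc => hb (hbc.trans hb')⟩
      · rw [if_neg hb, if_neg hb']
        exact iff_of_false G.irrefl
          (by rintro ⟨_, hbne⟩; exact hbne ((fin2_eq_one hb).trans (fin2_eq_one hb').symm))

end FarEdge

section Main
variable {V : Type*} {G : SimpleGraph V} {A : Set V} {k : ℕ}

lemma distToSet_le_two (hconn : G.Connected) (hk : 1 ≤ k) (hfree : HFree G (P3kP2 k))
    (f : P3kP2 (k-1) ↪g G) (hfA : Set.range ⇑f = A) (v : V) :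
    distToSet G v A ≤ 2 := by
  have hA : A.Nonempty := ⟨f (Sum.inl 0), hfA ▸ Set.mem_range_self _⟩
  -- no vertex has distToSet equal to n + 3
  have key : ∀ n v, distToSet G v A ≠ n + 3 := by
    intro n
    induction n with
    | zero =>
      intro v hv
      obtain ⟨w, hadj, hw⟩ := exists_adj_distToSet_pred (v := v) hconn hA (by omega)
      have hw2 : distToSet G w A = 2 := by omega
      -- v and w are both far from A
      refine no_far_edge hk hfree f hfA hadj ?_ ?_ ?_ ?_
      · exact not_mem_of_distToSet_ne_zero (G := G) (v := v) (by omega)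
      · exact not_mem_of_distToSet_ne_zero (G := G) (v := w) (by omega)
      · intro a ha hadj'
        have h1 : G.dist v a = 1 := SimpleGraph.dist_eq_one_iff_adj.mpr hadj'
        have := distToSet_le (G := G) (v := v) ha
        omega
      · intro a ha hadj'
        exact not_adj_of_distToSet_eq_two hw2 ha hadj'
    | succ m ih =>
      intro v hv
      obtain ⟨w, hadj, hw⟩ := exists_adj_distToSet_pred (v := v) hconn hA (by omega)
      exact ih w (by omega)
  by_contra hcon
  push_neg at hcon
  exact key (distToSet G v A - 3) v (by omega)

lemma C_indep (hconn : G.Connected) (hk : 1 ≤ k) (hfree : HFree G (P3kP2 k))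
    (f : P3kP2 (k-1) ↪g G) (hfA : Set.range ⇑f = A) :
    ∀ x, distToSet G x A = 2 → ∀ y, distToSet G y A = 2 → ¬ G.Adj x y := by
  intro x hx y hy hadj
  refine no_far_edge hk hfree f hfA hadj ?_ ?_ ?_ ?_
  · exact not_mem_of_distToSet_ne_zero (G := G) (v := x) (by omega)
  · exact not_mem_of_distToSet_ne_zero (G := G) (v := y) (by omega)
  · exact fun a ha => not_adj_of_distToSet_eq_two hx ha
  · exact fun a ha => not_adj_of_distToSet_eq_two hy ha

/-- The swap lemma: replacing `R ⊆ B ∩ D` by `A` inside `D`. -/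
lemma swap_bound [Fintype V] (hconn : G.Connected) (hk : 1 ≤ k) (hfree : HFree G (P3kP2 k))
    (f : P3kP2 (k-1) ↪g G) (hfA : Set.range ⇑f = A)
    (hstable : ∀ D : Set V, IsMinDomSet G D → IsStable G D)
    {D : Set V} (hD : IsMinDomSet G D)
    {R : Set V} (hRB : ∀ r ∈ R, distToSet G r A = 1) (hRD : R ⊆ D)
    (hcov : ∀ c, distToSet G c A = 2 → c ∉ D → ∃ d ∈ D, d ∉ R ∧ G.Adj d c) :
    R.ncard < A.ncard := by
  have hA : A.Nonempty := ⟨f (Sum.inl 0), hfA ▸ Set.mem_range_self _⟩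
  set D' : Set V := (D \ R) ∪ A with hD'
  have hdom : IsDomSet G D' := by
    intro v hv
    have hvA : v ∉ A := fun h => hv (Or.inr h)
    have h2 := distToSet_le_two hconn hk hfree f hfA v
    have h0 : distToSet G v A ≠ 0 := fun h => hvA (mem_of_distToSet_eq_zero hconn hA h)
    rcases (by omega : distToSet G v A = 1 ∨ distToSet G v A = 2) with h1 | h1
    · obtain ⟨a, haA, hadj⟩ := adj_of_distToSet_eq_one hA h1
      exact ⟨a, Or.inr haA, hadj.symm⟩
    · by_cases hvD : v ∈ D
      · exfalso
        refine hv (Or.inl ⟨hvD, fun hvR => ?_⟩)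
        have := hRB v hvR
        omega
      · obtain ⟨d, hdD, hdR, hadj⟩ := hcov v h1 hvD
        exact ⟨d, Or.inl ⟨hdD, hdR⟩, hadj⟩
  have hcard1 : D.ncard ≤ D'.ncard := hD.2 D' hdom
  have hcard2 : D'.ncard ≤ (D.ncard - R.ncard) + A.ncard := by
    refine le_trans (Set.ncard_union_le _ _) ?_
    rw [Set.ncard_diff hRD]
  have hcard3 : R.ncard ≤ D.ncard := Set.ncard_le_ncard hRD (Set.toFinite _)
  by_contra hcon
  push_neg at hcon
  -- then D' is a minimum dominating set containing an edge of A
  have hsize : D'.ncard ≤ D.ncard := by omega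
  have hmin : IsMinDomSet G D' := ⟨hdom, fun D'' h'' => le_trans hsize (hD.2 D'' h'')⟩
  have hstab := hstable D' hmin
  have h01 : G.Adj (f (Sum.inl 0)) (f (Sum.inl 1)) :=
    f.map_rel_iff.mpr ((p3_adj_inl_inl _ _).mpr (by decide))
  have hne : f (Sum.inl 0) ≠ f (Sum.inl 1) := f.injective.ne (by simp)
  exact hstab (Or.inr (hfA ▸ Set.mem_range_self _)) (Or.inr (hfA ▸ Set.mem_range_self _))
    hne h01

end Main

section Fam
variable {V : Type*} {G : SimpleGraph V} {A : Set V} {k : ℕ}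

lemma ncard_iUnion_le {V : Type*} [Fintype V] :
    ∀ (j : ℕ) (F : Fin j → Set V) (a : ℕ), (∀ i, (F i).ncard ≤ a) →
      (⋃ i, F i).ncard ≤ j * a := by
  intro j
  induction j with
  | zero =>
    intro F a h
    simp [Set.iUnion_of_empty]
  | succ m ih =>
    intro F a h
    have hsub : (⋃ i, F i) ⊆ F 0 ∪ ⋃ i : Fin m, F i.succ := by
      intro x hx
      simp only [Set.mem_iUnion] at hx
      obtain ⟨⟨iv, hiv⟩, hi⟩ := hx
      cases iv with
      | zero => exact Or.inl hi
      | succ n => exact Or.inr (Set.mem_iUnion.mpr ⟨⟨n, by omega⟩, hi⟩)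
    refine le_trans (Set.ncard_le_ncard hsub (Set.toFinite _)) ?_
    refine le_trans (Set.ncard_union_le _ _) ?_
    have h1 := ih (fun i => F i.succ) a (fun i => h _)
    have h0 := h 0
    calc (F 0).ncard + (⋃ i : Fin m, F i.succ).ncard ≤ a + m * a := Nat.add_le_add h0 h1
    _ = (m + 1) * a := by ring

lemma famBound [Fintype V] {D : Set V} (hfree : HFree G (P3kP2 k))
    (hstabD : ∀ x ∈ D, ∀ y ∈ D, x ≠ y → ¬ G.Adj x y)
    (hCind : ∀ x, distToSet G x A = 2 → ∀ y, distToSet G y A = 2 → ¬ G.Adj x y)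
    {S T : Set V} (hST : ∀ t ∈ T, t ∈ D ∧ t ∉ S)
    (hTpriv : ∀ t ∈ T, ∃ x, distToSet G x A = 2 ∧ x ∉ D ∧ G.Adj t x ∧
      ∀ d ∈ D, G.Adj x d → d = t)
    (j : ℕ) (cs : Fin (j+1) → V)
    (hcs : ∀ i, distToSet G (cs i) A = 2 ∧ cs i ∉ D ∧ {d | d ∈ D ∧ G.Adj (cs i) d} ⊆ S)
    (hdisj : ∀ i i', i ≠ i' →
      Disjoint {d | d ∈ D ∧ G.Adj (cs i) d} {d | d ∈ D ∧ G.Adj (cs i') d})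
    (hne : ∀ i, ∃ d, d ∈ D ∧ G.Adj (cs i) d)
    (htwo : 1 < {d | d ∈ D ∧ G.Adj (cs 0) d}.ncard)
    (hτ : k ≤ j + T.ncard) : False := by
  classical
  set ND : V → Set V := fun c => {d | d ∈ D ∧ G.Adj c d} with hND
  obtain ⟨σ, hσ, σ', hσ', hσσ'⟩ := (Set.one_lt_ncard (Set.toFinite _)).mp htwo
  -- private neighbours for elements of T
  set xt : V → V := fun t =>
    if h : ∃ x, distToSet G x A = 2 ∧ x ∉ D ∧ G.Adj t x ∧ ∀ d ∈ D, G.Adj x d → d = t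
    then h.choose else t with hxtdef
  have hxt : ∀ t ∈ T, distToSet G (xt t) A = 2 ∧ xt t ∉ D ∧ G.Adj t (xt t) ∧
      ∀ d ∈ D, G.Adj (xt t) d → d = t := by
    intro t ht
    have h := hTpriv t ht
    simp only [hxtdef, dif_pos h]
    exact h.choose_spec
  -- an injection from Fin (k - j) into T
  have hkj : k - j ≤ (Set.toFinite T).toFinset.card := by
    rw [← Set.ncard_eq_toFinset_card T]
    omega
  obtain ⟨tf, htfsub, htfcard⟩ := Finset.exists_subset_card_eq hkj
  set e : Fin (k - j) ≃ {x // x ∈ tf} := (tf.equivFin.trans (finCongr htfcard)).symm with he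
  set ι : Fin (k - j) → V := fun i => (e i : V) with hι
  have hιT : ∀ i, ι i ∈ T := fun i => (Set.Finite.mem_toFinset _).mp (htfsub (e i).2)
  have hιinj : Function.Injective ι := fun i i' h => e.injective (Subtype.ext h)
  -- the k units
  have hii1 : ∀ i : Fin k, (i : ℕ) < j → (i : ℕ) + 1 < j + 1 := by omega
  have hii2 : ∀ i : Fin k, ¬ (i : ℕ) < j → (i : ℕ) - j < k - j := by
    intro i h
    have := i.isLt
    omega
  set uu : Fin k → V := fun i =>
    if h : (i : ℕ) < j then (hne ⟨(i : ℕ) + 1, hii1 i h⟩).choose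
    else ι ⟨(i : ℕ) - j, hii2 i h⟩ with huu
  set ww : Fin k → V := fun i =>
    if h : (i : ℕ) < j then cs ⟨(i : ℕ) + 1, hii1 i h⟩
    else xt (ι ⟨(i : ℕ) - j, hii2 i h⟩) with hww
  set Tg : Fin k → Set V := fun i =>
    if h : (i : ℕ) < j then ND (cs ⟨(i : ℕ) + 1, hii1 i h⟩)
    else {ι ⟨(i : ℕ) - j, hii2 i h⟩} with hTg
  refine boom (C := {v | distToSet G v A = 2}) (D := D) hfree hstabD
    (fun x hx y hy => hCind x hx y hy) (cs 0) σ σ' (hcs 0).1 (hcs 0).2.1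
    hσ.1 hσ'.1 hσσ' hσ.2 hσ'.2 uu ww Tg ?_ ?_ ?_ ?_ ?_ ?_ ?_ ?_
  · -- Tg i ⊆ D
    intro i
    by_cases h : (i : ℕ) < j <;> simp only [hTg]
    · rw [dif_pos h]
      exact fun d hd => hd.1
    · rw [dif_neg h]
      intro d hd
      rw [Set.mem_singleton_iff] at hd
      subst hd
      exact (hST _ (hιT _)).1
  · -- pairwise disjoint tags
    intro i i' hii
    have hvne : (i : ℕ) ≠ (i' : ℕ) := fun hv => hii (Fin.ext hv)
    by_cases h : (i : ℕ) < j <;> by_cases h' : (i' : ℕ) < j <;>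
      simp only [hTg]
    · rw [dif_pos h, dif_pos h']
      exact hdisj _ _ (fun hc => hvne (by simpa using congrArg Fin.val hc))
    · rw [dif_pos h, dif_neg h']
      rw [Set.disjoint_singleton_right]
      intro hmem
      exact (hST _ (hιT _)).2 ((hcs _).2.2 hmem)
    · rw [dif_neg h, dif_pos h']
      rw [Set.disjoint_singleton_left]
      intro hmem
      exact (hST _ (hιT _)).2 ((hcs _).2.2 hmem)
    · rw [dif_neg h, dif_neg h']
      rw [Set.disjoint_singleton_left, Set.mem_singleton_iff]
      intro hmem
      have hiv : (i : ℕ) - j = (i' : ℕ) - j := by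
        have := hιinj hmem
        simpa using congrArg Fin.val this
      omega
  · -- tags avoid the neighbourhood of c0
    intro i d hd hadj
    by_cases h : (i : ℕ) < j <;> simp only [hTg] at hd
    · rw [dif_pos h] at hd
      have hdc0 : d ∈ ND (cs 0) := ⟨hd.1, hadj⟩
      have hne0 : (0 : Fin (j+1)) ≠ ⟨(i : ℕ) + 1, hii1 i h⟩ := by
        intro hc
        have := congrArg Fin.val hc
        simp at this
      exact (hdisj _ _ hne0).ne_of_mem hdc0 hd rfl
    · rw [dif_neg h, Set.mem_singleton_iff] at hd
      subst hd
      have hmem : ι ⟨(i : ℕ) - j, hii2 i h⟩ ∈ ND (cs 0) := ⟨(hST _ (hιT _)).1, hadj⟩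
      exact (hST _ (hιT _)).2 ((hcs 0).2.2 hmem)
  · -- u i ∈ Tg i
    intro i
    by_cases h : (i : ℕ) < j <;> simp only [hTg, huu]
    · rw [dif_pos h, dif_pos h]
      exact (hne _).choose_spec
    · rw [dif_neg h, dif_neg h]
      rfl
  · -- Adj (u i) (w i)
    intro i
    by_cases h : (i : ℕ) < j <;> simp only [huu, hww]
    · rw [dif_pos h, dif_pos h]
      exact (hne _).choose_spec.2.symm
    · rw [dif_neg h, dif_neg h]
      exact (hxt _ (hιT _)).2.2.1
  · -- w i ∈ C
    intro i
    by_cases h : (i : ℕ) < j <;> simp only [hww]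
    · rw [dif_pos h]
      exact (hcs _).1
    · rw [dif_neg h]
      exact (hxt _ (hιT _)).1
  · -- w i ∉ D
    intro i
    by_cases h : (i : ℕ) < j <;> simp only [hww]
    · rw [dif_pos h]
      exact (hcs _).2.1
    · rw [dif_neg h]
      exact (hxt _ (hιT _)).2.1
  · -- neighbours of w i inside D lie in Tg i
    intro i d hdD hadj
    by_cases h : (i : ℕ) < j <;> simp only [hww] at hadj <;> simp only [hTg]
    · rw [dif_pos h] at hadj
      rw [dif_pos h]
      exact ⟨hdD, hadj⟩
    · rw [dif_neg h] at hadj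
      rw [dif_neg h, Set.mem_singleton_iff]
      exact (hxt _ (hιT _)).2.2.2 d hdD hadj

end Fam

theorem stmt9
    {V : Type*} [Fintype V] (k : ℕ) (hk : 1 ≤ k) (G : SimpleGraph V)
    (hconn : G.Connected) (hfree : HFree G (P3kP2 k))
    (A : Set V) (hA : ∃ f : P3kP2 (k-1) ↪g G, Set.range f = A)
    (B C : Set V) (hB : B = {v | distToSet G v A = 1})
    (hC : C = {v | distToSet G v A = 2})
    (hstable : ∀ D : Set V, IsMinDomSet G D → IsStable G D)
    (D : Set V) (hD : IsMinDomSet G D)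
    (hmany : A.ncard ≤ {b ∈ B ∩ D | ¬ ∃ x ∈ C, IsPrivateNbr G D b x}.ncard) :
    (B ∩ D).ncard ≤ (k + 1) * A.ncard - 1 := by
  classical
  obtain ⟨f, hfA⟩ := hA
  have hA_ne : A.Nonempty := ⟨f (Sum.inl 0), hfA ▸ Set.mem_range_self _⟩
  have ha_pos : 0 < A.ncard := (Set.ncard_pos (Set.toFinite _)).mpr hA_ne
  have hstabD : ∀ x ∈ D, ∀ y ∈ D, x ≠ y → ¬ G.Adj x y := fun x hx y hy hne =>
    hstable D hD hx hy hne
  have hCind := C_indep hconn hk hfree f hfA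
  set S : Set V := {b ∈ B ∩ D | ¬ ∃ x ∈ C, IsPrivateNbr G D b x} with hSdef
  have hBmem : ∀ v, v ∈ B ↔ distToSet G v A = 1 := fun v => by rw [hB]; exact Iff.rfl
  have hCmem : ∀ v, v ∈ C ↔ distToSet G v A = 2 := fun v => by rw [hC]; exact Iff.rfl
  have hSsub : S ⊆ B ∩ D := fun b hb => hb.1
  have hSD : S ⊆ D := fun b hb => hb.1.2
  have hSB1 : ∀ s ∈ S, distToSet G s A = 1 := fun s hs => (hBmem s).mp hs.1.1
  set T : Set V := (B ∩ D) \ S with hTdef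
  have hST : ∀ t ∈ T, t ∈ D ∧ t ∉ S := fun t ht => ⟨ht.1.2, ht.2⟩
  have hcardST : T.ncard + S.ncard = (B ∩ D).ncard := by
    rw [hTdef]
    exact Set.ncard_diff_add_ncard_of_subset hSsub (Set.toFinite _)
  -- each element of T has a private neighbour in C
  have hTpriv : ∀ t ∈ T, ∃ x, distToSet G x A = 2 ∧ x ∉ D ∧ G.Adj t x ∧
      ∀ d ∈ D, G.Adj x d → d = t := by
    intro t ht
    obtain ⟨⟨htB, htD⟩, htS⟩ := ht
    rw [hSdef] at htS
    simp only [Set.mem_sep_iff, not_and, not_not] at htS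
    obtain ⟨x, hxC, hxpriv⟩ := htS (Set.mem_inter htB htD)
    have hx2 : distToSet G x A = 2 := (hCmem x).mp hxC
    have hxt_ne : x ≠ t := by
      intro h
      have h1 := (hBmem t).mp htB
      rw [h] at hx2
      omega
    have hxD : x ∉ D := by
      intro hxDmem
      have hmem : x ∈ insert x (G.neighborSet x) ∩ D := ⟨Set.mem_insert _ _, hxDmem⟩
      rw [hxpriv] at hmem
      exact hxt_ne hmem
    have htmem : t ∈ insert x (G.neighborSet x) ∩ D := by
      rw [hxpriv]; rfl
    have hadj : G.Adj t x := by
      rcases Set.mem_insert_iff.mp htmem.1 with h | h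
      · exact absurd h.symm hxt_ne
      · exact h.symm
    refine ⟨x, hx2, hxD, hadj, ?_⟩
    intro d hdD hadjxd
    have hmem : d ∈ insert x (G.neighborSet x) ∩ D := ⟨Set.mem_insert_of_mem _ hadjxd, hdD⟩
    rw [hxpriv] at hmem
    exact hmem
  -- closed neighbourhoods in D
  set ND : V → Set V := fun c => {d | d ∈ D ∧ G.Adj c d} with hND
  have hNDne : ∀ c, c ∉ D → (ND c).Nonempty := by
    intro c hc
    obtain ⟨u, huD, hadj⟩ := hD.1 c hc
    exact ⟨u, huD, hadj.symm⟩
  set Pgen : V → Prop := fun c => distToSet G c A = 2 ∧ c ∉ D ∧ ND c ⊆ S with hPgen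
  have hND2 : ∀ c, Pgen c → 1 < (ND c).ncard := by
    intro c hc
    obtain ⟨hc2, hcD, hcS⟩ := hc
    by_contra hle
    push_neg at hle
    obtain ⟨u, hu⟩ := hNDne c hcD
    have h1 : (ND c).ncard = 1 := by
      have hpos : 0 < (ND c).ncard := (Set.ncard_pos (Set.toFinite _)).mpr ⟨u, hu⟩
      omega
    obtain ⟨s, hs⟩ := Set.ncard_eq_one.mp h1
    have hsS : s ∈ S := hcS (by rw [hs]; rfl)
    have hpriv : IsPrivateNbr G D s c := by
      unfold IsPrivateNbr
      ext d
      simp only [Set.mem_inter_iff, Set.mem_insert_iff, Set.mem_singleton_iff,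
        SimpleGraph.mem_neighborSet]
      constructor
      · rintro ⟨h | h, hdD⟩
        · subst h; exact absurd hdD hcD
        · have hmem : d ∈ ND c := ⟨hdD, h⟩
          rw [hs] at hmem; exact hmem
      · intro hds
        have hsmem : s ∈ ND c := by rw [hs]; rfl
        rw [hds]
        exact ⟨Or.inr hsmem.2, hsmem.1⟩
    exact hsS.2 ⟨c, (hCmem c).mpr hc2, hpriv⟩
  -- minimal generators exist below any generator
  have hexmin : ∀ c, Pgen c → ∃ c', (Pgen c' ∧ ∀ c'', Pgen c'' → ND c'' ⊆ ND c' →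
      ND c'' = ND c') ∧ ND c' ⊆ ND c := by
    have key : ∀ n, ∀ c, (ND c).ncard = n → Pgen c → ∃ c', (Pgen c' ∧ ∀ c'', Pgen c'' →
        ND c'' ⊆ ND c' → ND c'' = ND c') ∧ ND c' ⊆ ND c := by
      intro n
      induction n using Nat.strong_induction_on with
      | _ n ih =>
        intro c hn hc
        by_cases hm : ∀ c'', Pgen c'' → ND c'' ⊆ ND c → ND c'' = ND c
        · exact ⟨c, ⟨hc, hm⟩, subset_rfl⟩
        · push_neg at hm
          obtain ⟨c'', hc'', hsub, hne⟩ := hm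
          have hlt : (ND c'').ncard < n := by
            rw [← hn]
            exact Set.ncard_lt_ncard (Set.ssubset_iff_subset_ne.mpr ⟨hsub, hne⟩)
              (Set.toFinite _)
          obtain ⟨c', hc', hsub'⟩ := ih _ hlt c'' rfl hc''
          exact ⟨c', hc', hsub'.trans hsub⟩
    exact fun c hc => key ((ND c).ncard) c rfl hc
  -- families of pairwise disjoint minimal generators
  set Fam : ℕ → Prop := fun j => ∃ cs : Fin j → V,
    (∀ i, (Pgen (cs i) ∧ ∀ c'', Pgen c'' → ND c'' ⊆ ND (cs i) → ND c'' = ND (cs i))) ∧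
    ∀ i i', i ≠ i' → Disjoint (ND (cs i)) (ND (cs i')) with hFam
  have hFam1 : Fam 1 := by
    by_cases hex : ∃ c, Pgen c
    · obtain ⟨c, hc⟩ := hex
      obtain ⟨c', hc', _⟩ := hexmin c hc
      exact ⟨fun _ => c', fun _ => hc', fun i i' hii => absurd (Subsingleton.elim i i') hii⟩
    · exfalso
      push_neg at hex
      have hcov : ∀ c, distToSet G c A = 2 → c ∉ D → ∃ d ∈ D, d ∉ S ∧ G.Adj d c := by
        intro c hc2 hcD
        by_contra hno
        push_neg at hno
        refine hex c ⟨hc2, hcD, ?_⟩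
        intro d hd
        by_contra hdS
        exact hno d hd.1 hdS hd.2.symm
      have hswap := swap_bound hconn hk hfree f hfA hstable hD hSB1 hSD hcov
      omega
  have hFamMono : ∀ j j', j' ≤ j → Fam j → Fam j' := by
    rintro j j' hle ⟨cs, h1, h2⟩
    refine ⟨fun i => cs (Fin.castLE hle i), fun i => h1 _, fun i i' hii => ?_⟩
    refine h2 _ _ (fun hc => hii ?_)
    exact Fin.ext (by simpa using congrArg Fin.val hc)
  have hFB : ∀ j, Fam (j+1) → k ≤ j + T.ncard → False := by
    rintro j ⟨cs, h1, h2⟩ hτ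
    refine famBound hfree hstabD hCind hST hTpriv j cs (fun i => (h1 i).1) h2
      (fun i => ?_) (hND2 _ (h1 0).1) hτ
    obtain ⟨d, hd⟩ := hNDne (cs i) ((h1 i).1.2.1)
    exact ⟨d, hd.1, hd.2⟩
  have hFamle : ∀ j, Fam j → j ≤ k := by
    intro j hFj
    by_contra hgt
    push_neg at hgt
    exact hFB k (hFamMono j (k+1) (by omega) hFj) (by omega)
  set ν := Nat.findGreatest Fam k with hν
  have hν1 : 1 ≤ ν := Nat.le_findGreatest hk hFam1
  have hνk : ν ≤ k := by rw [hν]; exact Nat.findGreatest_le (P := Fam) k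
  have hνF : Fam ν := Nat.findGreatest_spec hk hFam1
  have hνmax : ¬ Fam (ν + 1) := by
    rcases le_or_gt (ν + 1) k with hle | hlt
    · exact Nat.findGreatest_is_greatest (by omega) hle
    · intro hFν
      exact absurd (hFamle _ hFν) (by omega)
  obtain ⟨cs, hcs, hcsdisj⟩ := hνF
  set U : Set V := ⋃ i, ND (cs i) with hU
  have hSU : (S \ U).ncard < A.ncard := by
    refine swap_bound hconn hk hfree f hfA hstable hD
      (fun r hr => hSB1 r hr.1) (fun r hr => hSD hr.1) ?_
    intro c hc2 hcD
    by_contra hno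
    push_neg at hno
    have hsub : ND c ⊆ S \ U := by
      intro d hd
      by_contra hdm
      exact hno d hd.1 hdm hd.2.symm
    have hgen : Pgen c := ⟨hc2, hcD, hsub.trans Set.diff_subset⟩
    obtain ⟨c', ⟨hc'gen, hc'min⟩, hc'sub⟩ := hexmin c hgen
    refine hνmax ?_
    refine ⟨fun i => if h : (i : ℕ) < ν then cs ⟨i, h⟩ else c', fun i => ?_, ?_⟩
    · dsimp only
      by_cases h : (i : ℕ) < ν
      · rw [dif_pos h]; exact hcs _
      · rw [dif_neg h]; exact ⟨hc'gen, hc'min⟩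
    · intro i i' hii
      dsimp only
      have hvne : (i : ℕ) ≠ (i' : ℕ) := fun hv => hii (Fin.ext hv)
      by_cases h : (i : ℕ) < ν <;> by_cases h' : (i' : ℕ) < ν
      · rw [dif_pos h, dif_pos h']
        exact hcsdisj _ _ (fun hc => hvne (by simpa using congrArg Fin.val hc))
      · rw [dif_pos h, dif_neg h']
        refine Set.disjoint_right.mpr ?_
        intro x hx' hx
        have hxU : x ∈ U := Set.mem_iUnion.mpr ⟨⟨i, h⟩, hx⟩
        exact (hsub (hc'sub hx')).2 hxU
      · rw [dif_neg h, dif_pos h']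
        refine Set.disjoint_left.mpr ?_
        intro x hx' hx
        have hxU : x ∈ U := Set.mem_iUnion.mpr ⟨⟨i', h'⟩, hx⟩
        exact (hsub (hc'sub hx')).2 hxU
      · exfalso
        have := i.isLt
        have := i'.isLt
        omega
  have hFsize : ∀ i, (ND (cs i)).ncard ≤ A.ncard := by
    intro i
    obtain ⟨σi, hσi⟩ := hNDne (cs i) ((hcs i).1.2.1)
    have hlt : (ND (cs i) \ {σi}).ncard < A.ncard := by
      refine swap_bound hconn hk hfree f hfA hstable hD
        (fun r hr => hSB1 r ((hcs i).1.2.2 hr.1)) (fun r hr => hr.1.1) ?_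
      intro c hc2 hcD
      by_contra hno
      push_neg at hno
      have hsub : ND c ⊆ ND (cs i) \ {σi} := by
        intro d hd
        by_contra hdm
        exact hno d hd.1 hdm hd.2.symm
      have hgen : Pgen c := ⟨hc2, hcD, (hsub.trans Set.diff_subset).trans (hcs i).1.2.2⟩
      have heq := (hcs i).2 c hgen (hsub.trans Set.diff_subset)
      have hσc : σi ∈ ND c := by rw [heq]; exact hσi
      exact (hsub hσc).2 rfl
    have hdiff := Set.ncard_diff_singleton_add_one hσi (Set.toFinite _)
    omega
  have hUcard : U.ncard ≤ ν * A.ncard :=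
    ncard_iUnion_le ν (fun i => ND (cs i)) A.ncard hFsize
  have hSle : S.ncard ≤ (S \ U).ncard + U.ncard := by
    refine le_trans (Set.ncard_le_ncard (fun x hx => ?_) (Set.toFinite _))
      (Set.ncard_union_le _ _)
    by_cases hxU : x ∈ U
    · exact Or.inr hxU
    · exact Or.inl ⟨hx, hxU⟩
  have hτν : ¬ (k ≤ (ν - 1) + T.ncard) := by
    intro hcon
    refine hFB (ν - 1) ?_ hcon
    have hee : ν - 1 + 1 = ν := by omega
    rw [hee]
    exact ⟨cs, hcs, hcsdisj⟩
  have hmul1 : ν * A.ncard + (k - ν) * A.ncard = k * A.ncard := by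
    rw [← Nat.add_mul]
    congr 1
    omega
  have hmul2 : (k - ν) ≤ (k - ν) * A.ncard := Nat.le_mul_of_pos_right _ ha_pos
  have hexp : (k + 1) * A.ncard = k * A.ncard + A.ncard := by ring
  omega
end
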